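/- arXiv:2103.05068 — 4 statements merged into one kernel-verified Lean document; each statement's English description precedes it below -/
import Mathlib

section
/- For every integer k ≥ 2, over all probability vectors p = (p_0,…,p_{k−1}) with strictly positive entries, the constant C̄_p satisfies C̄_p ≥ 3/(2 log k), with equality if and only if p = (1/k, 1/k, …, 1/k). -/
open Finset

namespace RiffleShuffle

/-- `phi p t = ∑ i, p i ^ t`. -/
noncomputable def phi {k : ℕ} (p : Fin k → ℝ) (t : ℝ) : ℝ := ∑ i, p i ^ t

/-- `psi p t = - log (phi p t)`. -/
noncomputable def psi {k : ℕ} (p : Fin k → ℝ) (t : ℝ) : ℝ := - Real.log (phi p t)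

/-- The maximal entry of `p`. -/
noncomputable def pmax {k : ℕ} (p : Fin k → ℝ) : ℝ := ⨆ i, p i

/-- `C_p = (3+θ)/(4 ψ_p(2))`, where `θ` is the solution of `φ_p(θ) = φ_p(2)²`. -/
noncomputable def Cmain {k : ℕ} (p : Fin k → ℝ) (θ : ℝ) : ℝ := (3 + θ) / (4 * psi p 2)

/-- `C̃_p = 1/log(1/p_max)`. -/
noncomputable def Ctilde {k : ℕ} (p : Fin k → ℝ) : ℝ := 1 / Real.log (1 / pmax p)

/-- `C̄_p = max(C̃_p, C_p)`. -/
noncomputable def Cbar {k : ℕ} (p : Fin k → ℝ) (θ : ℝ) : ℝ := max (Ctilde p) (Cmain p θ)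

lemma phi_strictAnti {k : ℕ} (hk : 0 < k) (p : Fin k → ℝ)
    (h0 : ∀ i, 0 < p i) (h1 : ∀ i, p i < 1) : StrictAnti (phi p) := by
  intro s t hst
  have : Nonempty (Fin k) := ⟨⟨0, hk⟩⟩
  exact Finset.sum_lt_sum_of_nonempty univ_nonempty fun i _ =>
    Real.rpow_lt_rpow_of_exponent_gt (h0 i) (h1 i) hst

set_option maxHeartbeats 1600000 in
/-- **Proposition 2, first part**: for any `k ≥ 2`, `C̄_p ≥ 3/(2 log k)` with equality
exactly at the uniform vector `p = (1/k, …, 1/k)`. -/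
theorem Cbar_min (k : ℕ) (hk : 2 ≤ k) (p : Fin k → ℝ)
    (hpos : ∀ i, 0 < p i) (hsum : ∑ i, p i = 1)
    (θ : ℝ) (hθ : phi p θ = (phi p 2) ^ 2) :
    3 / (2 * Real.log k) ≤ Cbar p θ ∧
      (Cbar p θ = 3 / (2 * Real.log k) ↔ p = fun _ => 1 / (k : ℝ)) := by
  have hk0 : 0 < k := by omega
  have hk1 : (1:ℝ) < k := by exact_mod_cast hk.trans_lt' (by norm_num)
  have hkR : (0:ℝ) < k := by positivity
  have hlogk : 0 < Real.log k := Real.log_pos hk1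
  have : Nonempty (Fin k) := ⟨⟨0, hk0⟩⟩
  have hnt : Nontrivial (Fin k) := Fin.nontrivial_iff_two_le.mpr hk
  -- each p i < 1
  have hlt1 : ∀ i, p i < 1 := by
    intro i
    obtain ⟨j, hj⟩ := exists_ne i
    have h := Finset.single_lt_sum hj (mem_univ i) (mem_univ j) (hpos j)
      (fun m _ _ => (hpos m).le)
    rw [hsum] at h
    exact h
  have hanti := phi_strictAnti hk0 p hpos hlt1
  -- phi p 2 = ∑ p i ^ 2 (nat pow)
  have hphi2 : phi p 2 = ∑ i, p i ^ (2:ℕ) := by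
    unfold phi
    refine Finset.sum_congr rfl fun i _ => ?_
    rw [show (2:ℝ) = ((2:ℕ):ℝ) by norm_num, Real.rpow_natCast]
  have hphi3 : phi p 3 = ∑ i, p i ^ (3:ℕ) := by
    unfold phi
    refine Finset.sum_congr rfl fun i _ => ?_
    rw [show (3:ℝ) = ((3:ℕ):ℝ) by norm_num, Real.rpow_natCast]
  -- phi p 2 bounds
  have hphi2pos : 0 < phi p 2 := by
    rw [hphi2]; exact Finset.sum_pos (fun i _ => pow_pos (hpos i) 2) univ_nonempty
  have hphi2lt1 : phi p 2 < 1 := by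
    calc phi p 2 < phi p 1 := hanti one_lt_two
    _ = 1 := by
      unfold phi; simp only [Real.rpow_one]; exact hsum
  -- sum of squares identity
  have hident : ∑ i, (p i - 1/k)^2 = (∑ i, p i ^ (2:ℕ)) - 1/k := by
    have hcard : (univ : Finset (Fin k)).card = k := by simp
    have : ∀ i, (p i - 1/k)^2 = p i ^ (2:ℕ) - (2/k) * p i + 1/k^2 := by
      intro i; field_simp; ring
    rw [Finset.sum_congr rfl fun i _ => this i, Finset.sum_add_distrib,
      Finset.sum_sub_distrib, ← Finset.mul_sum, hsum, Finset.sum_const, hcard,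
      nsmul_eq_mul]
    field_simp
    ring
  have hident' : phi p 2 = 1/k + ∑ i, (p i - 1/k)^2 := by
    rw [hident, hphi2]; ring
  have hphi2ge : 1/(k:ℝ) ≤ phi p 2 := by
    rw [hident']
    have : 0 ≤ ∑ i, (p i - 1/k)^2 := Finset.sum_nonneg fun i _ => sq_nonneg _
    linarith
  -- psi p 2 facts
  have hpsi2 : psi p 2 = Real.log (1 / phi p 2) := by
    unfold psi
    rw [one_div, Real.log_inv]
  have hpsi2pos : 0 < psi p 2 := by
    unfold psi
    have := Real.log_neg hphi2pos hphi2lt1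
    linarith
  have hpsi2le : psi p 2 ≤ Real.log k := by
    rw [hpsi2]
    apply Real.log_le_log (by positivity)
    rw [div_le_iff₀ hphi2pos]
    calc (1:ℝ) = k * (1/k) := by field_simp
    _ ≤ k * phi p 2 := by
        apply mul_le_mul_of_nonneg_left hphi2ge hkR.le
  -- phi p 2 ^ 2 ≤ phi p 3 (Cauchy–Schwarz)
  have hCS : (phi p 2) ^ 2 ≤ phi p 3 := by
    rw [hphi2, hphi3]
    have h := Finset.sum_mul_sq_le_sq_mul_sq univ
      (fun i => Real.sqrt (p i)) (fun i => p i * Real.sqrt (p i))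
    have h1 : ∀ i : Fin k, Real.sqrt (p i) * (p i * Real.sqrt (p i)) = p i ^ (2:ℕ) := by
      intro i
      have := Real.sq_sqrt (hpos i).le
      nlinarith [Real.sqrt_nonneg (p i)]
    have h2 : ∀ i : Fin k, Real.sqrt (p i) ^ 2 = p i := fun i => Real.sq_sqrt (hpos i).le
    have h3 : ∀ i : Fin k, (p i * Real.sqrt (p i)) ^ 2 = p i ^ (3:ℕ) := by
      intro i
      have := Real.sq_sqrt (hpos i).le
      ring_nf
      nlinarith [Real.sqrt_nonneg (p i)]
    simp only [h1, h2, h3] at h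
    calc (∑ i, p i ^ (2:ℕ)) ^ 2 ≤ (∑ i, p i) * ∑ i, p i ^ (3:ℕ) := h
    _ = ∑ i, p i ^ (3:ℕ) := by rw [hsum, one_mul]
  -- θ ≥ 3
  have hθ3 : 3 ≤ θ := by
    by_contra h
    push_neg at h
    have := hanti h
    rw [hθ] at this
    exact absurd hCS (not_le.mpr this)
  -- main inequality on Cmain
  have hCmain : 3 / (2 * Real.log k) ≤ Cmain p θ := by
    unfold Cmain
    rw [div_le_div_iff₀ (by positivity) (by positivity)]
    nlinarith [mul_le_mul_of_nonneg_left hpsi2le (by linarith : (0:ℝ) ≤ 3 + θ)]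
  have hmain : 3 / (2 * Real.log k) ≤ Cbar p θ := hCmain.trans (le_max_right _ _)
  refine ⟨hmain, ?_, ?_⟩
  · -- equality → uniform
    intro heq
    by_contra hne
    have hex : ∃ i, p i ≠ 1/k := by
      by_contra hall
      push_neg at hall
      exact hne (funext hall)
    obtain ⟨i₀, hi₀⟩ := hex
    have hstrict : 1/(k:ℝ) < phi p 2 := by
      rw [hident']
      have : 0 < ∑ i, (p i - 1/k)^2 :=
        Finset.sum_pos' (fun i _ => sq_nonneg _)
          ⟨i₀, mem_univ i₀, by
            have h0 := sub_ne_zero.mpr hi₀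
            positivity⟩
      linarith
    have hpsilt : psi p 2 < Real.log k := by
      rw [hpsi2]
      apply Real.log_lt_log (one_div_pos.mpr hphi2pos)
      rw [div_lt_iff₀ hphi2pos]
      calc (1:ℝ) = k * (1/k) := by field_simp
      _ < k * phi p 2 := by
          exact mul_lt_mul_of_pos_left hstrict hkR
    have : 3 / (2 * Real.log k) < Cmain p θ := by
      unfold Cmain
      rw [div_lt_div_iff₀ (by positivity) (by positivity)]
      nlinarith
    have hlt : 3 / (2 * Real.log k) < Cbar p θ := by
      unfold Cbar
      exact this.trans_le (le_max_right _ _)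
    rw [heq] at hlt
    exact lt_irrefl _ hlt
  · -- uniform → equality
    intro hp
    subst hp
    have huphi : ∀ t : ℝ, phi (fun _ : Fin k => 1/(k:ℝ)) t = k * (1/k) ^ t := by
      intro t
      unfold phi
      rw [Finset.sum_const, Finset.card_univ, Fintype.card_fin, nsmul_eq_mul]
    have h2 : phi (fun _ : Fin k => 1/(k:ℝ)) 2 = 1/k := by
      rw [huphi, show (2:ℝ) = ((2:ℕ):ℝ) by norm_num, Real.rpow_natCast]
      field_simp
    have h3 : phi (fun _ : Fin k => 1/(k:ℝ)) 3 = (1/k)^(2:ℕ) := by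
      rw [huphi, show (3:ℝ) = ((3:ℕ):ℝ) by norm_num, Real.rpow_natCast]
      field_simp
    -- θ = 3
    have hθeq : θ = 3 := by
      apply hanti.injective
      rw [hθ, h2, h3]
    have hpsieq : psi (fun _ : Fin k => 1/(k:ℝ)) 2 = Real.log k := by
      unfold psi
      rw [h2, one_div, Real.log_inv, neg_neg]
    have hpm : pmax (fun _ : Fin k => 1/(k:ℝ)) = 1/k := ciSup_const
    have hCt : Ctilde (fun _ : Fin k => 1/(k:ℝ)) = 1 / Real.log k := by
      unfold Ctilde
      rw [hpm, one_div_one_div]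
    have hCm : Cmain (fun _ : Fin k => 1/(k:ℝ)) θ = 3 / (2 * Real.log k) := by
      unfold Cmain
      rw [hθeq, hpsieq]
      ring
    unfold Cbar
    rw [hCt, hCm, max_eq_right]
    rw [div_le_div_iff₀ hlogk (by positivity)]
    nlinarith

end RiffleShuffle
end

section
/- Suppose K ≥ (C̃_p + ε)·log N for some ε > 0. Then there exist δ = δ(p,ε) > 0 and a constant A such that the following holds for a p-random sequence (s_1,…,s_N) of strings of length K: for every i ∈ {1,…,N−1} and every realization of the first i sorted strings (s_1,…,s_i) in which none of s_1,…,s_i begins with two (k−1)-digits, the conditional probability given (s_1,…,s_i) that s_{i+1} = s_i is at most A·N^{−δ}. -/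
open Finset

namespace RiffleShuffle

/-- The minimal entry of `p`. -/
noncomputable def pmin {k : ℕ} (p : Fin k → ℝ) : ℝ := ⨅ i, p i

/-- Strings of length `K` over the alphabet `{0,…,k-1}`. -/
abbrev Str (k K : ℕ) := Fin K → Fin k

/-- Probability of an individual string, all digits i.i.d. with law `p`. -/
noncomputable def strP {k : ℕ} (p : Fin k → ℝ) {K : ℕ} (s : Str k K) : ℝ := ∏ j, p (s j)

/-- Probability of a tuple of `N` i.i.d. `p`-random strings. -/
noncomputable def seqP {k : ℕ} (p : Fin k → ℝ) {N K : ℕ} (ω : Fin N → Str k K) : ℝ :=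
  ∏ i, strP p (ω i)

/-- The base-`k` value of a string; comparing these values is exactly the lexicographic
order on strings of the same length. -/
def lexVal {k K : ℕ} (s : Str k K) : ℕ := ∑ j : Fin K, (s j : ℕ) * k ^ (K - 1 - (j : ℕ))

/-- The lexicographically sorted rearrangement of a tuple of strings. -/
noncomputable def sortedSeq {k N K : ℕ} (ω : Fin N → Str k K) : Fin N → Str k K :=
  fun i => ω (Tuple.sort (fun j => lexVal (ω j)) i)

/-- The edge set of the shuffle graph of a (sorted) sequence of strings: the edge between
`i` and `i+1` is present iff `s i = s (i+1)`; edges are recorded as pairs `(i, i+1)`. -/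
def edgeSet {k N K : ℕ} (s : Fin N → Str k K) : Finset (Fin N × Fin N) :=
  univ.filter (fun e => (e.2 : ℕ) = (e.1 : ℕ) + 1 ∧ s e.1 = s e.2)

/-- `s` begins with two digits equal to `d`. -/
def beginsWith2 {k : ℕ} (d : Fin k) {K : ℕ} (s : Str k K) : Prop :=
  ∃ h : 2 ≤ K, s ⟨0, by omega⟩ = d ∧ s ⟨1, by omega⟩ = d

instance {k K : ℕ} (d : Fin k) (s : Str k K) : Decidable (beginsWith2 d s) :=
  exists_prop_decidable _

private lemma geom_aux (k n : ℕ) (hk : 1 ≤ k) :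
    ∑ r ∈ Finset.range n, (k - 1) * k ^ r = k ^ n - 1 := by
  induction n with
  | zero => simp
  | succ n ih =>
    have h1 : 1 ≤ k ^ n := Nat.one_le_pow _ _ hk
    have hs : k ^ (n + 1) = k ^ n + (k - 1) * k ^ n := by
      obtain ⟨m, rfl⟩ : ∃ m, k = m + 1 := ⟨k - 1, by omega⟩
      simp only [Nat.add_sub_cancel, pow_succ]; ring
    rw [Finset.sum_range_succ, ih]
    omega

private lemma tail_sum_lt {k K : ℕ} (hk : 1 ≤ k) (s : Str k K) (m : Fin K) :
    ∑ j ∈ univ.filter (fun j : Fin K => m < j), (s j : ℕ) * k ^ (K - 1 - (j : ℕ))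
      < k ^ (K - 1 - (m : ℕ)) := by
  have hK : 0 < K := m.pos
  have hb : ∑ j ∈ univ.filter (fun j : Fin K => m < j), (s j : ℕ) * k ^ (K - 1 - (j : ℕ))
      ≤ ∑ j ∈ univ.filter (fun j : Fin K => m < j), (k - 1) * k ^ (K - 1 - (j : ℕ)) := by
    refine Finset.sum_le_sum fun j _ => Nat.mul_le_mul_right _ ?_
    have := (s j).isLt; omega
  have he : ∑ j ∈ univ.filter (fun j : Fin K => m < j), (k - 1) * k ^ (K - 1 - (j : ℕ))
      = ∑ r ∈ Finset.range (K - 1 - (m : ℕ)), (k - 1) * k ^ r := by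
    refine Finset.sum_nbij' (fun j : Fin K => K - 1 - (j : ℕ))
      (fun r => (⟨K - 1 - r, by omega⟩ : Fin K)) ?_ ?_ ?_ ?_ ?_
    · intro a ha
      simp only [mem_filter, mem_univ, true_and, Fin.lt_def] at ha
      have := a.isLt
      simp only [Finset.mem_range]; omega
    · intro r hr
      simp only [Finset.mem_range] at hr
      simp only [mem_filter, mem_univ, true_and, Fin.lt_def]
      have := m.isLt; simp; omega
    · intro a ha
      simp only [mem_filter, mem_univ, true_and, Fin.lt_def] at ha
      have := a.isLt
      apply Fin.ext; simp; omega
    · intro r hr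
      simp only [Finset.mem_range] at hr
      simp; omega
    · intro a ha; rfl
  have hg := geom_aux k (K - 1 - (m : ℕ)) hk
  have h1 : 1 ≤ k ^ (K - 1 - (m : ℕ)) := Nat.one_le_pow _ _ hk
  omega

private lemma lexVal_lt_of_agree {k K : ℕ} (hk : 1 ≤ k) (s t : Str k K) (m : Fin K)
    (hagree : ∀ j : Fin K, j < m → s j = t j) (hm : s m < t m) :
    lexVal s < lexVal t := by
  classical
  have hsplit : ∀ f : Fin K → ℕ, ∑ j, f j
      = (∑ j ∈ univ.filter (fun j : Fin K => j < m), f j) + f m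
        + ∑ j ∈ univ.filter (fun j : Fin K => m < j), f j := by
    intro f
    rw [← Finset.sum_filter_add_sum_filter_not univ (fun j : Fin K => j < m) f]
    have hset : univ.filter (fun j : Fin K => ¬ j < m)
        = insert m (univ.filter (fun j : Fin K => m < j)) := by
      ext a
      simp only [mem_filter, mem_univ, true_and, mem_insert, Fin.lt_def, Fin.ext_iff]
      omega
    rw [hset, Finset.sum_insert (by simp only [mem_filter, mem_univ, true_and]; exact lt_irrefl m)]
    ring
  unfold lexVal
  rw [hsplit, hsplit]
  have hhead : ∑ j ∈ univ.filter (fun j : Fin K => j < m), (s j : ℕ) * k ^ (K - 1 - (j : ℕ))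
      = ∑ j ∈ univ.filter (fun j : Fin K => j < m), (t j : ℕ) * k ^ (K - 1 - (j : ℕ)) := by
    refine Finset.sum_congr rfl fun j hj => ?_
    rw [hagree j (by simpa using hj)]
  have htail := tail_sum_lt hk s m
  have hmm : ((s m : ℕ) + 1) * k ^ (K - 1 - (m : ℕ)) ≤ (t m : ℕ) * k ^ (K - 1 - (m : ℕ)) :=
    Nat.mul_le_mul_right _ hm
  rw [add_mul, one_mul] at hmm
  omega

private lemma lexVal_injective {k K : ℕ} (hk : 1 ≤ k) :
    Function.Injective (lexVal (k := k) (K := K)) := by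
  classical
  intro s t h
  by_contra hne
  have hD : (univ.filter (fun j : Fin K => s j ≠ t j)).Nonempty := by
    rcases Function.ne_iff.1 hne with ⟨j, hj⟩
    exact ⟨j, by simp [hj]⟩
  set m := (univ.filter (fun j : Fin K => s j ≠ t j)).min' hD with hmdef
  have hmem := Finset.min'_mem _ hD
  rw [← hmdef] at hmem
  have hsm : s m ≠ t m := (Finset.mem_filter.1 hmem).2
  have hagree : ∀ j : Fin K, j < m → s j = t j := by
    intro j hj
    by_contra hne'
    exact absurd (Finset.min'_le _ j (Finset.mem_filter.2 ⟨Finset.mem_univ j, hne'⟩)) (by rw [← hmdef]; exact not_le.2 hj)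
  rcases lt_or_gt_of_ne hsm with h' | h'
  · exact absurd h (ne_of_lt (lexVal_lt_of_agree hk s t m hagree h'))
  · exact absurd h (ne_of_gt (lexVal_lt_of_agree hk t s m (fun j hj => (hagree j hj).symm) h'))

private lemma card_perm_count {N : ℕ} (v : Fin N → ℕ) (π : Equiv.Perm (Fin N)) (x : ℕ) :
    Fintype.card {b : Fin N // v (π b) ≤ x} = Fintype.card {a : Fin N // v a ≤ x} :=
  Fintype.card_congr (Equiv.subtypeEquiv π (fun _ => Iff.rfl))

private lemma card_update_count {N : ℕ} (v : Fin N → ℕ) (j' : Fin N) (c : ℕ) (x : ℕ) :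
    Fintype.card {a : Fin N // Function.update v j' c a ≤ x}
        + (if v j' ≤ x then 1 else 0)
      = Fintype.card {a : Fin N // v a ≤ x} + (if c ≤ x then 1 else 0) := by
  classical
  have hrw : ∀ w : Fin N → ℕ, Fintype.card {a : Fin N // w a ≤ x}
      = ∑ a : Fin N, (if w a ≤ x then 1 else 0) := by
    intro w
    rw [Fintype.card_subtype, Finset.card_filter]
  rw [hrw, hrw]
  have hupd : (fun a : Fin N => (if Function.update v j' c a ≤ x then 1 else 0))
      = Function.update (fun a : Fin N => (if v a ≤ x then (1:ℕ) else 0)) j'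
          (if c ≤ x then 1 else 0) := by
    funext a
    by_cases h : a = j'
    · subst h; simp
    · simp [Function.update_of_ne h]
  rw [hupd, Finset.sum_update_of_mem (Finset.mem_univ j')]
  rw [Finset.sum_eq_sum_sdiff_singleton_add (Finset.mem_univ j')
    (fun a : Fin N => (if v a ≤ x then (1:ℕ) else 0))]
  ring

/-- Updating the coordinate holding the `ii`-th sorted value to something at least as large
    does not change the sorted sequence strictly before position `ii`. -/
private lemma sort_update_prefix {N : ℕ} (v : Fin N → ℕ) (ii : Fin N) (c : ℕ)
    (hc : v (Tuple.sort v ii) ≤ c) (j : Fin N) (hj : j < ii) :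
    Function.update v (Tuple.sort v ii) c
        (Tuple.sort (Function.update v (Tuple.sort v ii) c) j)
      = v (Tuple.sort v j) := by
  classical
  set j' := Tuple.sort v ii with hj'def
  set v' := Function.update v j' c with hv'def
  have hu : Monotone (v ∘ Tuple.sort v) := Tuple.monotone_sort v
  have hu' : Monotone (v' ∘ Tuple.sort v') := Tuple.monotone_sort v'
  have key : ∀ (x : ℕ) (a : Fin N), (a : ℕ) < Fintype.card {b : Fin N // (v ∘ Tuple.sort v) b ≤ x}
      ↔ (v ∘ Tuple.sort v) a ≤ x := fun x a => by
    rw [Fintype.card_subtype]; exact Tuple.lt_card_le_iff_apply_le_of_monotone hu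
  have key' : ∀ (x : ℕ) (a : Fin N), (a : ℕ) < Fintype.card {b : Fin N // (v' ∘ Tuple.sort v') b ≤ x}
      ↔ (v' ∘ Tuple.sort v') a ≤ x := fun x a => by
    rw [Fintype.card_subtype]; exact Tuple.lt_card_le_iff_apply_le_of_monotone hu'
  have hcu : ∀ x, Fintype.card {b : Fin N // (v ∘ Tuple.sort v) b ≤ x}
      = Fintype.card {a : Fin N // v a ≤ x} := fun x => card_perm_count v (Tuple.sort v) x
  have hcu' : ∀ x, Fintype.card {b : Fin N // (v' ∘ Tuple.sort v') b ≤ x}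
      = Fintype.card {a : Fin N // v' a ≤ x} := fun x => card_perm_count v' (Tuple.sort v') x
  have hCC : ∀ x, Fintype.card {a : Fin N // v' a ≤ x} + (if v j' ≤ x then 1 else 0)
      = Fintype.card {a : Fin N // v a ≤ x} + (if c ≤ x then 1 else 0) := by
    intro x
    have h := card_update_count v j' c x
    rw [← hv'def] at h
    exact h
  have hvj : v j' = (v ∘ Tuple.sort v) ii := rfl
  have hji : (j : ℕ) < (ii : ℕ) := hj
  -- `ii < card {v ≤ x}` whenever `(v∘sort) ii ≤ x`
  change (v' ∘ Tuple.sort v') j = (v ∘ Tuple.sort v) j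
  have h1 : (v' ∘ Tuple.sort v') j ≤ (v ∘ Tuple.sort v) j := by
    rw [← key' ((v ∘ Tuple.sort v) j) j, hcu']
    have hCCx := hCC ((v ∘ Tuple.sort v) j)
    rcases le_or_gt ((v ∘ Tuple.sort v) ii) ((v ∘ Tuple.sort v) j) with hcase | hcase
    · have hii : (ii : ℕ) < Fintype.card {a : Fin N // v a ≤ (v ∘ Tuple.sort v) j} := by
        rw [← hcu]; exact (key _ ii).2 hcase
      rw [if_pos (hvj ▸ hcase)] at hCCx
      by_cases hcx : c ≤ (v ∘ Tuple.sort v) j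
      · rw [if_pos hcx] at hCCx; omega
      · rw [if_neg hcx] at hCCx; omega
    · have hjlt : (j : ℕ) < Fintype.card {a : Fin N // v a ≤ (v ∘ Tuple.sort v) j} := by
        rw [← hcu]; exact (key _ j).2 le_rfl
      have hnc : ¬ c ≤ (v ∘ Tuple.sort v) j := by
        intro hcc; exact absurd (le_trans hc hcc) (not_le.2 hcase)
      rw [if_neg (by rw [hvj]; exact not_le.2 hcase), if_neg hnc] at hCCx
      omega
  have h2 : (v ∘ Tuple.sort v) j ≤ (v' ∘ Tuple.sort v') j := by
    rw [← key ((v' ∘ Tuple.sort v') j) j, hcu]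
    have hCCx := hCC ((v' ∘ Tuple.sort v') j)
    have hjlt : (j : ℕ) < Fintype.card {a : Fin N // v' a ≤ (v' ∘ Tuple.sort v') j} := by
      rw [← hcu']; exact (key' _ j).2 le_rfl
    by_cases hcc : c ≤ (v' ∘ Tuple.sort v') j
    · rw [if_pos hcc, if_pos (le_trans hc hcc)] at hCCx
      omega
    · rw [if_neg hcc] at hCCx
      by_cases hvx : v j' ≤ (v' ∘ Tuple.sort v') j
      · rw [if_pos hvx] at hCCx; omega
      · rw [if_neg hvx] at hCCx; omega
  exact le_antisymm h1 h2

private lemma strP_nonneg {k K : ℕ} {p : Fin k → ℝ} (hpos : ∀ i, 0 < p i) (s : Str k K) :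
    0 ≤ strP p s :=
  Finset.prod_nonneg fun j _ => (hpos (s j)).le

private lemma seqP_nonneg {k N K : ℕ} {p : Fin k → ℝ} (hpos : ∀ i, 0 < p i)
    (ω : Fin N → Str k K) : 0 ≤ seqP p ω :=
  Finset.prod_nonneg fun j _ => strP_nonneg hpos _

private lemma le_pmax {k : ℕ} {p : Fin k → ℝ} (x : Fin k) : p x ≤ pmax p :=
  le_ciSup (Set.finite_range p).bddAbove x

private lemma pmin_le {k : ℕ} {p : Fin k → ℝ} (x : Fin k) : pmin p ≤ p x :=
  ciInf_le (Set.finite_range p).bddBelow x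

private lemma strP_le_pmax {k K : ℕ} {p : Fin k → ℝ} (hpos : ∀ i, 0 < p i) (s : Str k K) :
    strP p s ≤ pmax p ^ K := by
  have := Finset.prod_le_prod (s := (univ : Finset (Fin K)))
    (f := fun j => p (s j)) (g := fun _ => pmax p)
    (fun j _ => (hpos (s j)).le) (fun j _ => le_pmax (s j))
  simpa [strP] using this

private lemma sum_Tset {k K : ℕ} (p : Fin k → ℝ) (hsum : ∑ i, p i = 1) (d : Fin k)
    (h0 : (0 : ℕ) < K) (h1 : (1 : ℕ) < K) :
    ∑ t ∈ univ.filter (fun t : Str k K => t ⟨0, h0⟩ = d ∧ t ⟨1, h1⟩ = d), strP p t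
      = p d ^ 2 := by
  classical
  set s : Fin K → Finset (Fin k) := fun j => if (j : ℕ) < 2 then {d} else univ with hs
  have hset : Fintype.piFinset s
      = univ.filter (fun t : Str k K => t ⟨0, h0⟩ = d ∧ t ⟨1, h1⟩ = d) := by
    ext t
    simp only [Fintype.mem_piFinset, mem_filter, mem_univ, true_and, hs]
    constructor
    · intro h
      constructor
      · have := h ⟨0, h0⟩; simpa using this
      · have := h ⟨1, h1⟩; simpa using this
    · rintro ⟨ha, hb⟩ j
      by_cases hj : (j : ℕ) < 2
      · have : j = ⟨0, h0⟩ ∨ j = ⟨1, h1⟩ := by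
          simp only [Fin.ext_iff, Fin.val_mk]
          omega
        rcases this with rfl | rfl
        · simpa [hj] using ha
        · simpa [hj] using hb
      · simp [hj]
  have hps := Finset.prod_univ_sum s (fun (_ : Fin K) (x : Fin k) => p x)
  rw [hset] at hps
  have hfil : univ.filter (fun j : Fin K => (j : ℕ) < 2) = {⟨0, h0⟩, ⟨1, h1⟩} := by
    ext j
    simp only [mem_filter, mem_univ, true_and, mem_insert, mem_singleton, Fin.ext_iff]
    omega
  have hprod : (∏ j : Fin K, ∑ x ∈ s j, p x) = p d ^ 2 := by
    have : ∀ j : Fin K, (∑ x ∈ s j, p x) = if (j : ℕ) < 2 then p d else 1 := by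
      intro j
      by_cases hj : (j : ℕ) < 2 <;> simp only [hs, hj, ↓reduceIte] <;> simp [hsum]
    rw [Finset.prod_congr rfl fun j _ => this j, Finset.prod_ite, Finset.prod_const,
      Finset.prod_const, one_pow, mul_one, hfil]
    rw [Finset.card_insert_of_notMem (by simp [Fin.ext_iff]), Finset.card_singleton]
  rw [← hprod, hps]
  rfl

private lemma core {k N K : ℕ} (hk1 : 1 ≤ k) (hK2 : 2 ≤ K) (p : Fin k → ℝ)
    (hpos : ∀ i, 0 < p i) (hsum : ∑ i, p i = 1)
    (i : ℕ) (h1 : 1 ≤ i) (hiN : i < N) (hi1N : i - 1 < N) (τ : Fin N → Str k K)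
    (d : Fin k) (htop : ∀ x : Fin k, x ≤ d)
    (hσ2 : ¬ (τ ⟨i - 1, hi1N⟩ ⟨0, by omega⟩ = d ∧ τ ⟨i - 1, hi1N⟩ ⟨1, by omega⟩ = d)) :
    ∑ ω ∈ univ.filter (fun ω : Fin N → Str k K =>
          (∀ j : Fin N, (j : ℕ) < i → sortedSeq ω j = τ j) ∧
            sortedSeq ω ⟨i, hiN⟩ = sortedSeq ω ⟨i - 1, hi1N⟩),
        seqP p ω
      ≤ (p d)⁻¹ ^ 2 * (pmax p ^ K * ((N : ℝ) * ∑ ω ∈ univ.filter (fun ω : Fin N → Str k K =>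
            ∀ j : Fin N, (j : ℕ) < i → sortedSeq ω j = τ j),
          seqP p ω)) := by
  classical
  have h0K : (0 : ℕ) < K := by omega
  have h1K : (1 : ℕ) < K := by omega
  set σ : Str k K := τ ⟨i - 1, hi1N⟩ with hσdef
  set F₁ := univ.filter (fun ω : Fin N → Str k K =>
        (∀ j : Fin N, (j : ℕ) < i → sortedSeq ω j = τ j) ∧
          sortedSeq ω ⟨i, hiN⟩ = sortedSeq ω ⟨i - 1, hi1N⟩) with hF₁
  set F₂ := univ.filter (fun ω : Fin N → Str k K =>
        ∀ j : Fin N, (j : ℕ) < i → sortedSeq ω j = τ j) with hF₂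
  set T : Finset (Str k K) :=
    univ.filter (fun t : Str k K => t ⟨0, h0K⟩ = d ∧ t ⟨1, h1K⟩ = d) with hT
  -- the lexicographic value of every string in `T` exceeds that of `σ`
  have hσt : ∀ t ∈ T, lexVal σ < lexVal t := by
    intro t ht
    rw [hT, mem_filter] at ht
    obtain ⟨-, ht0, ht1⟩ := ht
    by_cases h0 : σ ⟨0, h0K⟩ = d
    · have h1' : σ ⟨1, h1K⟩ ≠ d := fun hc => hσ2 ⟨h0, hc⟩
      have hlt : σ ⟨1, h1K⟩ < t ⟨1, h1K⟩ := by
        rw [ht1]; exact lt_of_le_of_ne (htop _) h1'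
      refine lexVal_lt_of_agree hk1 σ t ⟨1, h1K⟩ ?_ hlt
      intro j hj
      have hj0 : j = ⟨0, h0K⟩ := by
        simp only [Fin.lt_def, Fin.ext_iff, Fin.val_mk] at hj ⊢; omega
      rw [hj0, h0, ht0]
    · have hlt : σ ⟨0, h0K⟩ < t ⟨0, h0K⟩ := by
        rw [ht0]; exact lt_of_le_of_ne (htop _) h0
      refine lexVal_lt_of_agree hk1 σ t ⟨0, h0K⟩ (fun j hj => ?_) hlt
      exact absurd hj (by simp [Fin.lt_def])
  -- the coordinate holding the `i`-th sorted string carries `σ`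
  have hf1 : ∀ ω ∈ F₁, ω (Tuple.sort (fun a => lexVal (ω a)) ⟨i, hiN⟩) = σ := by
    intro ω hω
    rw [hF₁, mem_filter] at hω
    obtain ⟨-, hωa, hωb⟩ := hω
    have hh : sortedSeq ω ⟨i, hiN⟩ = ω (Tuple.sort (fun a => lexVal (ω a)) ⟨i, hiN⟩) := rfl
    rw [← hh, hωb]
    exact hωa ⟨i - 1, hi1N⟩ (by simp only [Fin.val_mk]; omega)
  -- updating that coordinate with an element of `T` lands in `F₂`
  have hf3 : ∀ ω ∈ F₁, ∀ t ∈ T,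
      Function.update ω (Tuple.sort (fun a => lexVal (ω a)) ⟨i, hiN⟩) t ∈ F₂ := by
    intro ω hω t ht
    have hσω := hf1 ω hω
    rw [hF₁, mem_filter] at hω
    obtain ⟨-, hωa, -⟩ := hω
    rw [hF₂, mem_filter]
    refine ⟨mem_univ _, fun j hj => ?_⟩
    apply lexVal_injective hk1
    set ι : Fin N := Tuple.sort (fun a => lexVal (ω a)) ⟨i, hiN⟩ with hι
    have hval : (fun a => lexVal (Function.update ω ι t a))
        = Function.update (fun a => lexVal (ω a)) ι (lexVal t) := by
      funext a
      by_cases ha : a = ι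
      · subst ha; simp
      · simp [Function.update_of_ne ha]
    calc lexVal (sortedSeq (Function.update ω ι t) j)
        = (fun a => lexVal (Function.update ω ι t a))
            (Tuple.sort (fun a => lexVal (Function.update ω ι t a)) j) := rfl
      _ = Function.update (fun a => lexVal (ω a)) ι (lexVal t)
            (Tuple.sort (Function.update (fun a => lexVal (ω a)) ι (lexVal t)) j) := by
          rw [hval]
      _ = (fun a => lexVal (ω a)) (Tuple.sort (fun a => lexVal (ω a)) j) := by
          rw [hι]
          refine sort_update_prefix (fun a => lexVal (ω a)) ⟨i, hiN⟩ (lexVal t) ?_ j hj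
          show lexVal (ω (Tuple.sort (fun a => lexVal (ω a)) ⟨i, hiN⟩)) ≤ lexVal t
          rw [← hι, hσω]
          exact (hσt t ht).le
      _ = lexVal (τ j) := congrArg lexVal (hωa j hj)
  -- pointwise inequality
  have key1 : ∀ ω ∈ F₁, p d ^ 2 * seqP p ω
      ≤ pmax p ^ K * ∑ t ∈ T,
          seqP p (Function.update ω (Tuple.sort (fun a => lexVal (ω a)) ⟨i, hiN⟩) t) := by
    intro ω hω
    have hσω := hf1 ω hω
    set ι : Fin N := Tuple.sort (fun a => lexVal (ω a)) ⟨i, hiN⟩ with hι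
    have hR : 0 ≤ ∏ b ∈ univ \ {ι}, strP p (ω b) :=
      Finset.prod_nonneg fun b _ => strP_nonneg hpos _
    have hdecomp : seqP p ω = strP p σ * ∏ b ∈ univ \ {ι}, strP p (ω b) := by
      rw [seqP, Finset.prod_eq_mul_prod_sdiff_singleton_of_mem (mem_univ ι), hσω]
    have hupd : ∀ t : Str k K, seqP p (Function.update ω ι t)
        = strP p t * ∏ b ∈ univ \ {ι}, strP p (ω b) := by
      intro t
      rw [seqP]
      have hpoint : ∀ b, strP p (Function.update ω ι t b)
          = Function.update (fun b => strP p (ω b)) ι (strP p t) b := by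
        intro b
        by_cases hb : b = ι
        · subst hb; simp
        · simp [Function.update_of_ne hb]
      rw [Finset.prod_congr rfl (fun b _ => hpoint b),
        Finset.prod_update_of_mem (mem_univ ι)]
    have hTsum : ∑ t ∈ T, seqP p (Function.update ω ι t)
        = p d ^ 2 * ∏ b ∈ univ \ {ι}, strP p (ω b) := by
      rw [Finset.sum_congr rfl (fun t _ => hupd t), ← Finset.sum_mul]
      rw [hT, sum_Tset p hsum d h0K h1K]
    rw [hTsum, hdecomp]
    have hσle := strP_le_pmax hpos σ
    have hpd2 : (0:ℝ) ≤ p d ^ 2 := sq_nonneg _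
    nlinarith [mul_le_mul_of_nonneg_left (mul_le_mul_of_nonneg_right hσle hR) hpd2]
  have key2 : p d ^ 2 * ∑ ω ∈ F₁, seqP p ω
      ≤ pmax p ^ K * ∑ ω ∈ F₁, ∑ t ∈ T,
          seqP p (Function.update ω (Tuple.sort (fun a => lexVal (ω a)) ⟨i, hiN⟩) t) := by
    rw [Finset.mul_sum, Finset.mul_sum]
    exact Finset.sum_le_sum key1
  have key3 : ∑ ω ∈ F₁, ∑ t ∈ T,
        seqP p (Function.update ω (Tuple.sort (fun a => lexVal (ω a)) ⟨i, hiN⟩) t)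
      ≤ (N : ℝ) * ∑ ω ∈ F₂, seqP p ω := by
    rw [← Finset.sum_product']
    have hinj : ∀ x ∈ F₁ ×ˢ T, ∀ y ∈ F₁ ×ˢ T,
        (fun x : (Fin N → Str k K) × Str k K =>
          ((Tuple.sort (fun a => lexVal (x.1 a)) ⟨i, hiN⟩ : Fin N),
            Function.update x.1 (Tuple.sort (fun a => lexVal (x.1 a)) ⟨i, hiN⟩) x.2)) x
        = (fun x : (Fin N → Str k K) × Str k K =>
          ((Tuple.sort (fun a => lexVal (x.1 a)) ⟨i, hiN⟩ : Fin N),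
            Function.update x.1 (Tuple.sort (fun a => lexVal (x.1 a)) ⟨i, hiN⟩) x.2)) y
        → x = y := by
      intro x hx y hy he
      simp only [Prod.mk.injEq] at he
      obtain ⟨he1, he2⟩ := he
      rw [Finset.mem_product] at hx hy
      have hx1 := hf1 x.1 hx.1
      have hy1 := hf1 y.1 hy.1
      have hfun : x.1 = y.1 := by
        funext a
        by_cases ha : a = Tuple.sort (fun a => lexVal (x.1 a)) ⟨i, hiN⟩
        · rw [ha, hx1, he1, hy1]
        · have h2 := congrFun he2 a
          rw [Function.update_of_ne ha, Function.update_of_ne (by rw [← he1]; exact ha)] at h2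
          exact h2
      have hsnd : x.2 = y.2 := by
        have h2 := congrFun he2 (Tuple.sort (fun a => lexVal (x.1 a)) ⟨i, hiN⟩)
        rw [Function.update_self] at h2
        rw [h2, he1, Function.update_self]
      exact Prod.ext hfun hsnd
    have himg : ∑ x ∈ F₁ ×ˢ T,
          seqP p (Function.update x.1 (Tuple.sort (fun a => lexVal (x.1 a)) ⟨i, hiN⟩) x.2)
        = ∑ y ∈ (F₁ ×ˢ T).image (fun x : (Fin N → Str k K) × Str k K =>
          ((Tuple.sort (fun a => lexVal (x.1 a)) ⟨i, hiN⟩ : Fin N),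
            Function.update x.1 (Tuple.sort (fun a => lexVal (x.1 a)) ⟨i, hiN⟩) x.2)),
          seqP p y.2 :=
      (Finset.sum_image (f := fun y : Fin N × (Fin N → Str k K) => seqP p y.2) hinj).symm
    have hsub : ((F₁ ×ˢ T).image (fun x : (Fin N → Str k K) × Str k K =>
          ((Tuple.sort (fun a => lexVal (x.1 a)) ⟨i, hiN⟩ : Fin N),
            Function.update x.1 (Tuple.sort (fun a => lexVal (x.1 a)) ⟨i, hiN⟩) x.2)))
        ⊆ (univ : Finset (Fin N)) ×ˢ F₂ := by
      intro y hy
      rw [Finset.mem_image] at hy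
      obtain ⟨x, hx, rfl⟩ := hy
      rw [Finset.mem_product] at hx
      rw [Finset.mem_product]
      exact ⟨mem_univ _, hf3 x.1 hx.1 x.2 hx.2⟩
    calc ∑ x ∈ F₁ ×ˢ T,
          seqP p (Function.update x.1 (Tuple.sort (fun a => lexVal (x.1 a)) ⟨i, hiN⟩) x.2)
        = ∑ y ∈ (F₁ ×ˢ T).image (fun x : (Fin N → Str k K) × Str k K =>
          ((Tuple.sort (fun a => lexVal (x.1 a)) ⟨i, hiN⟩ : Fin N),
            Function.update x.1 (Tuple.sort (fun a => lexVal (x.1 a)) ⟨i, hiN⟩) x.2)),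
          seqP p y.2 := himg
      _ ≤ ∑ y ∈ (univ : Finset (Fin N)) ×ˢ F₂, seqP p y.2 :=
          Finset.sum_le_sum_of_subset_of_nonneg hsub (fun y _ _ => seqP_nonneg hpos y.2)
      _ = (N : ℝ) * ∑ ω ∈ F₂, seqP p ω := by
          rw [Finset.sum_product]
          have hcst : ∀ x : Fin N, ∑ y ∈ F₂, seqP p (((x, y) : Fin N × (Fin N → Str k K)).2)
              = ∑ ω ∈ F₂, seqP p ω := fun x => rfl
          rw [Finset.sum_congr rfl fun x _ => hcst x, Finset.sum_const, Finset.card_univ,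
            Fintype.card_fin, nsmul_eq_mul]
  have hmain : p d ^ 2 * ∑ ω ∈ F₁, seqP p ω
      ≤ pmax p ^ K * ((N : ℝ) * ∑ ω ∈ F₂, seqP p ω) :=
    calc p d ^ 2 * ∑ ω ∈ F₁, seqP p ω
        ≤ pmax p ^ K * ∑ ω ∈ F₁, ∑ t ∈ T,
            seqP p (Function.update ω (Tuple.sort (fun a => lexVal (ω a)) ⟨i, hiN⟩) t) := key2
      _ ≤ pmax p ^ K * ((N : ℝ) * ∑ ω ∈ F₂, seqP p ω) := by
          refine mul_le_mul_of_nonneg_left key3 (pow_nonneg ?_ K)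
          exact le_trans (hpos ⟨0, by omega⟩).le (le_pmax _)
  calc ∑ ω ∈ F₁, seqP p ω
      = (p d)⁻¹ ^ 2 * (p d ^ 2 * ∑ ω ∈ F₁, seqP p ω) := by
        rw [inv_pow, inv_mul_cancel_left₀ (pow_ne_zero 2 (ne_of_gt (hpos d)))]
    _ ≤ (p d)⁻¹ ^ 2 * (pmax p ^ K * ((N : ℝ) * ∑ ω ∈ F₂, seqP p ω)) := by
        refine mul_le_mul_of_nonneg_left hmain ?_
        positivity

/-- **Lemma (no repeat, conditional)**: if `K ≥ (C̃_p + ε) log N`, then conditioned on any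
realization of the first `i` sorted strings in which none begins with two `(k-1)`-digits, the
conditional probability that the next sorted string equals the `i`-th one is `O(N^{-δ})`.
The conditional bound is stated in the form `P[cond ∧ repeat] ≤ A N^{-δ} P[cond]`. -/
theorem no_repeat_conditional (k : ℕ) (hk : 2 ≤ k) (p : Fin k → ℝ)
    (hpos : ∀ i, 0 < p i) (hsum : ∑ i, p i = 1) (ε : ℝ) (hε : 0 < ε) :
    ∃ δ : ℝ, 0 < δ ∧ ∃ A : ℝ, ∀ N K : ℕ,
      (Ctilde p + ε) * Real.log N ≤ (K : ℝ) →
      ∀ i : ℕ, ∀ h1 : 1 ≤ i, ∀ hiN : i < N, ∀ τ : Fin N → Str k K,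
        (∀ j : Fin N, (j : ℕ) < i → ¬ beginsWith2 ⟨k - 1, by omega⟩ (τ j)) →
        ∑ ω ∈ univ.filter (fun ω : Fin N → Str k K =>
              (∀ j : Fin N, (j : ℕ) < i → sortedSeq ω j = τ j) ∧
                sortedSeq ω ⟨i, hiN⟩ = sortedSeq ω ⟨i - 1, by omega⟩),
            seqP p ω
          ≤ A * (N : ℝ) ^ (-δ) *
            ∑ ω ∈ univ.filter (fun ω : Fin N → Str k K =>
                ∀ j : Fin N, (j : ℕ) < i → sortedSeq ω j = τ j),
              seqP p ω := by
  classical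
  haveI : Nonempty (Fin k) := ⟨⟨0, by omega⟩⟩
  obtain ⟨i0, hi0⟩ := Finite.exists_max p
  obtain ⟨i1, hi1⟩ := Finite.exists_min p
  have hpmax_eq : pmax p = p i0 :=
    le_antisymm (ciSup_le hi0) (le_ciSup (Set.finite_range p).bddAbove i0)
  have hpmin_eq : pmin p = p i1 :=
    le_antisymm (ciInf_le (Set.finite_range p).bddBelow i1) (le_ciInf hi1)
  have hpmaxpos : 0 < pmax p := hpmax_eq ▸ hpos i0
  have hpminpos : 0 < pmin p := hpmin_eq ▸ hpos i1
  have hple1 : ∀ x : Fin k, p x ≤ 1 := by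
    intro x
    calc p x ≤ ∑ i, p i := Finset.single_le_sum (fun i _ => (hpos i).le) (mem_univ x)
      _ = 1 := hsum
  have hpmax1 : pmax p < 1 := by
    rw [hpmax_eq]
    haveI : Nontrivial (Fin k) :=
      ⟨⟨⟨0, by omega⟩, ⟨1, by omega⟩, by simp [Fin.ext_iff]⟩⟩
    obtain ⟨j, hj⟩ := exists_ne i0
    have hadd := Finset.add_sum_erase univ p (mem_univ i0)
    have hjer : j ∈ univ.erase i0 := Finset.mem_erase.2 ⟨hj, mem_univ j⟩
    have hjle : p j ≤ ∑ x ∈ univ.erase i0, p x :=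
      Finset.single_le_sum (fun x _ => (hpos x).le) hjer
    have := hpos j
    rw [hsum] at hadd
    linarith
  have hpmin1 : pmin p ≤ 1 := hpmin_eq ▸ hple1 i1
  set L := Real.log (1 / pmax p) with hL
  have hLpos : 0 < L := Real.log_pos (one_lt_one_div hpmaxpos hpmax1)
  have hCt : Ctilde p = 1 / L := rfl
  have hCtpos : 0 < Ctilde p + ε := by rw [hCt]; positivity
  have hpmininv1 : 1 ≤ (pmin p)⁻¹ ^ 2 := by
    have h := mul_inv_cancel₀ (ne_of_gt hpminpos)
    have h2 : 1 ≤ (pmin p)⁻¹ := by nlinarith [inv_pos.2 hpminpos]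
    nlinarith
  refine ⟨ε * L, mul_pos hε hLpos,
    (pmin p)⁻¹ ^ 2 * Real.exp (ε * L / (Ctilde p + ε)), ?_⟩
  intro N K hK i h1 hiN τ hτ
  have hN2 : 2 ≤ N := by omega
  have hNpos : (0 : ℝ) < N := by exact_mod_cast (by omega : 0 < N)
  have hlogN : 0 ≤ Real.log N := Real.log_nonneg (by exact_mod_cast (by omega : 1 ≤ N))
  have hrpow : ((N : ℝ)) ^ (-(ε * L)) = Real.exp (Real.log N * (-(ε * L))) :=
    Real.rpow_def_of_pos hNpos _
  have hexp1 : 1 ≤ Real.exp (ε * L / (Ctilde p + ε)) := by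
    have := Real.add_one_le_exp (ε * L / (Ctilde p + ε))
    have h0 : 0 ≤ ε * L / (Ctilde p + ε) := by positivity
    linarith
  set S₂ := ∑ ω ∈ univ.filter (fun ω : Fin N → Str k K =>
      ∀ j : Fin N, (j : ℕ) < i → sortedSeq ω j = τ j), seqP p ω with hS₂
  have hS2 : 0 ≤ S₂ := Finset.sum_nonneg fun ω _ => seqP_nonneg hpos ω
  by_cases hK2 : 2 ≤ K
  · -- main case
    have hi1N : i - 1 < N := by omega
    set dd : Fin k := ⟨k - 1, by omega⟩ with hdd
    have htop : ∀ x : Fin k, x ≤ dd := by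
      intro x
      have := x.isLt
      rw [Fin.le_def, hdd]
      simp only [Fin.val_mk]
      omega
    have hσ2 : ¬ (τ ⟨i - 1, hi1N⟩ ⟨0, by omega⟩ = dd ∧ τ ⟨i - 1, hi1N⟩ ⟨1, by omega⟩ = dd) := by
      intro hc
      exact hτ ⟨i - 1, hi1N⟩ (by simp only [Fin.val_mk]; omega) ⟨hK2, hc⟩
    have hcore := core (by omega) hK2 p hpos hsum i h1 hiN hi1N τ dd htop hσ2
    rw [← hS₂] at hcore
    have hNK : pmax p ^ K * (N : ℝ) ≤ (N : ℝ) ^ (-(ε * L)) := by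
      have hlogpmax : Real.log (pmax p) = -L := by
        rw [hL, one_div, Real.log_inv]; ring
      have hKL : (1 + ε * L) * Real.log N ≤ (K : ℝ) * L := by
        have hm := mul_le_mul_of_nonneg_right hK hLpos.le
        have he : (Ctilde p + ε) * Real.log N * L = (1 + ε * L) * Real.log N := by
          rw [hCt]; field_simp; try ring
        rw [he] at hm
        exact hm
      have hpk : Real.exp ((K : ℝ) * Real.log (pmax p)) = pmax p ^ K := by
        rw [← Real.log_pow, Real.exp_log (pow_pos hpmaxpos K)]
      have hexpand : pmax p ^ K * (N : ℝ)
          = Real.exp ((K : ℝ) * Real.log (pmax p) + Real.log N) := by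
        rw [Real.exp_add, hpk, Real.exp_log hNpos]
      rw [hexpand, hrpow]
      apply Real.exp_le_exp.2
      rw [hlogpmax]
      nlinarith only [hKL]
    have hconst : (p dd)⁻¹ ^ 2 * (pmax p ^ K * (N : ℝ))
        ≤ (pmin p)⁻¹ ^ 2 * Real.exp (ε * L / (Ctilde p + ε)) * (N : ℝ) ^ (-(ε * L)) := by
      have hpmindd : pmin p ≤ p dd := pmin_le dd
      have ha : (p dd)⁻¹ ≤ (pmin p)⁻¹ := inv_anti₀ hpminpos hpmindd
      have ha2 : (p dd)⁻¹ ^ 2 ≤ (pmin p)⁻¹ ^ 2 :=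
        pow_le_pow_left₀ (le_of_lt (inv_pos.2 (hpos dd))) ha 2
      have h0 : 0 ≤ pmax p ^ K * (N : ℝ) := by positivity
      have h1' : 0 ≤ (pmin p)⁻¹ ^ 2 := by positivity
      have h2' : 0 ≤ (N : ℝ) ^ (-(ε * L)) := le_of_lt (Real.rpow_pos_of_pos hNpos _)
      have hmm := mul_le_mul ha2 hNK h0 h1'
      have h3' : 0 ≤ (pmin p)⁻¹ ^ 2 * (N : ℝ) ^ (-(ε * L)) := mul_nonneg h1' h2'
      nlinarith only [hexp1, h3', hmm]
    have hstep : (p dd)⁻¹ ^ 2 * (pmax p ^ K * ((N : ℝ) * S₂))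
        ≤ (pmin p)⁻¹ ^ 2 * Real.exp (ε * L / (Ctilde p + ε)) * (N : ℝ) ^ (-(ε * L)) * S₂ := by
      have heq : (p dd)⁻¹ ^ 2 * (pmax p ^ K * ((N : ℝ) * S₂))
          = ((p dd)⁻¹ ^ 2 * (pmax p ^ K * (N : ℝ))) * S₂ := by ring
      rw [heq]
      exact mul_le_mul_of_nonneg_right hconst hS2
    exact le_trans hcore hstep
  · -- small K: the trivial bound suffices
    refine le_trans (Finset.sum_le_sum_of_subset_of_nonneg
      (t := univ.filter (fun ω : Fin N → Str k K =>
        ∀ j : Fin N, (j : ℕ) < i → sortedSeq ω j = τ j)) ?_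
      fun ω _ _ => seqP_nonneg hpos ω) ?_
    · intro ω hω
      exact Finset.mem_filter.2 ⟨(Finset.mem_filter.1 hω).1, (Finset.mem_filter.1 hω).2.1⟩
    · have hKle1 : (K : ℝ) ≤ 1 := by exact_mod_cast (by omega : K ≤ 1)
      have hlogN1 : Real.log N ≤ 1 / (Ctilde p + ε) := by
        rw [le_div_iff₀ hCtpos]
        nlinarith only [hK, hKle1, hCtpos]
      have h1A : 1 ≤ (pmin p)⁻¹ ^ 2 * Real.exp (ε * L / (Ctilde p + ε)) * (N : ℝ) ^ (-(ε * L)) := by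
        have he : Real.exp (ε * L / (Ctilde p + ε)) * (N : ℝ) ^ (-(ε * L))
            = Real.exp (ε * L / (Ctilde p + ε) + Real.log N * (-(ε * L))) := by
          rw [Real.exp_add, hrpow]
        have harg : 0 ≤ ε * L / (Ctilde p + ε) + Real.log N * (-(ε * L)) := by
          have hm : Real.log N * (ε * L) ≤ (1 / (Ctilde p + ε)) * (ε * L) :=
            mul_le_mul_of_nonneg_right hlogN1 (by positivity)
          have hq : (1 / (Ctilde p + ε)) * (ε * L) = ε * L / (Ctilde p + ε) := by ring
          nlinarith only [hm, hq]
        have h3 : 1 ≤ Real.exp (ε * L / (Ctilde p + ε)) * (N : ℝ) ^ (-(ε * L)) := by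
          rw [he]
          have hexpo := Real.add_one_le_exp (ε * L / (Ctilde p + ε) + Real.log N * (-(ε * L)))
          linarith only [hexpo, harg]
        nlinarith only [hpmininv1, h3]
      exact le_mul_of_one_le_left hS2 h1A

end RiffleShuffle
end

section
/- Let k ≥ 2 and K ≥ 1 be integers and let s_a <_lex s_b be two strings over the alphabet {0,…,k−1}, each of length at most K. Then the lexicographic interval I_{s_a,s_b} = {s ∈ {0,…,k−1}^K : s_a <_lex s <_lex s_b} can be written as a disjoint union of blocks: I_{s_a,s_b} = ⋃_{x ∈ X} B_x for some set X of at most 2·K·k strings, each of length at most K, with the blocks B_x (x ∈ X) pairwise disjoint. -/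
namespace RiffleShuffle

private theorem lex_of_prefix_ne {α : Type*} [LinearOrder α] {a s : List α}
    (h : a <+: s) (hne : a ≠ s) : List.Lex (· < ·) a s := by
  obtain ⟨t, rfl⟩ := h
  match t with
  | [] => simp at hne
  | c :: t' =>
    clear hne
    induction a with
    | nil => exact List.Lex.nil
    | cons hd tl ih => exact List.Lex.cons ih

private theorem lex_iff {α : Type*} [LinearOrder α] (a s : List α) :
    List.Lex (· < ·) a s ↔
      (a <+: s ∧ a ≠ s) ∨ ∃ p x y u v, x < y ∧ a = p ++ x :: u ∧ s = p ++ y :: v := by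
  constructor
  · intro h
    induction h with
    | nil => exact Or.inl ⟨List.nil_prefix, by simp⟩
    | @cons a l₁ l₂ h ih =>
      rcases ih with ⟨hp, hne⟩ | ⟨p, x, y, u, v, hxy, rfl, rfl⟩
      · exact Or.inl ⟨List.cons_prefix_cons.2 ⟨rfl, hp⟩, by simp [hne]⟩
      · exact Or.inr ⟨a :: p, x, y, u, v, hxy, rfl, rfl⟩
    | @rel a₁ l₁ a₂ l₂ h => exact Or.inr ⟨[], a₁, a₂, l₁, l₂, h, rfl, rfl⟩
  · rintro (⟨hp, hne⟩ | ⟨p, x, y, u, v, hxy, rfl, rfl⟩)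
    · exact lex_of_prefix_ne hp hne
    · exact List.Lex.append_left _ (List.Lex.rel hxy) p

/-- **Lemma (block decomposition of a lexicographic interval)**: for strings `s_a <_lex s_b`
over `{0,…,k-1}` of length at most `K`, the set of length-`K` strings strictly between them
is a disjoint union of at most `2Kk` blocks `B_x` (a block `B_x` being the set of length-`K`
strings with prefix `x`). -/
theorem block_decomposition (k K : ℕ) (hk : 2 ≤ k) (hK : 1 ≤ K)
    (sa sb : List (Fin k)) (hsa : sa.length ≤ K) (hsb : sb.length ≤ K)
    (hab : List.Lex (· < ·) sa sb) :
    ∃ X : Finset (List (Fin k)),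
      X.card ≤ 2 * K * k ∧
      (∀ x ∈ X, x.length ≤ K) ∧
      (∀ s : List (Fin k), s.length = K →
        ((List.Lex (· < ·) sa s ∧ List.Lex (· < ·) s sb) ↔ ∃ x ∈ X, x <+: s)) ∧
      ∀ x ∈ X, ∀ y ∈ X, x ≠ y → ∀ s : List (Fin k), s.length = K →
        ¬(x <+: s ∧ y <+: s) := by
  classical
  obtain ⟨k, rfl⟩ : ∃ m, k = m + 2 := ⟨k - 2, by omega⟩
  -- blocks covering `{s : sa < s}`
  set A : Finset (List (Fin (k + 2))) :=
    (if sa.length < K then {sa} else ∅) ∪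
      (Finset.univ.filter (fun p : Fin sa.length × Fin (k + 2) => sa.get p.1 < p.2)).image
        (fun p => sa.take p.1.val ++ [p.2]) with hA
  -- blocks covering `{s : s < sb}`
  set B : Finset (List (Fin (k + 2))) :=
    (Finset.univ.filter (fun p : Fin sb.length × Fin (k + 2) => p.2 < sb.get p.1)).image
      (fun p => sb.take p.1.val ++ [p.2]) with hB
  set X : Finset (List (Fin (k + 2))) :=
    (A ∪ B).filter (fun z => (∃ x ∈ A, x <+: z) ∧ (∃ y ∈ B, y <+: z)) with hX
  -- generic facts about deviation blocks
  have dev_len : ∀ (t : List (Fin (k+2))) (i : Fin t.length) (d : Fin (k+2)),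
      (t.take i.val ++ [d]).length = i.val + 1 := by
    intro t i d
    simp [List.length_take, Nat.min_eq_left (Nat.le_of_lt i.isLt)]
  have dev_get_last : ∀ (t : List (Fin (k+2))) (i : Fin t.length) (d : Fin (k+2)),
      (t.take i.val ++ [d])[i.val]'(by rw [dev_len]; omega) = d := by
    intro t i d
    have h : (t.take i.val).length = i.val := by
      simp [List.length_take, Nat.min_eq_left (Nat.le_of_lt i.isLt)]
    exact List.getElem_concat_length h.symm _
  have dev_get_lt : ∀ (t : List (Fin (k+2))) (i : Fin t.length) (d : Fin (k+2)) (j : ℕ)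
      (hj : j < i.val), (t.take i.val ++ [d])[j]'(by rw [dev_len]; omega)
        = t[j]'(by have := i.isLt; omega) := by
    intro t i d j hj
    have h1 : j < (t.take i.val).length := by
      simp [List.length_take, Nat.min_eq_left (Nat.le_of_lt i.isLt)]; omega
    rw [List.getElem_append_left h1, List.getElem_take]
  have dev_prefix : ∀ (t : List (Fin (k+2))) (i : Fin t.length) (d : Fin (k+2))
      (s : List (Fin (k+2))), (t.take i.val ++ [d]) <+: s ↔
        ∃ u, s = t.take i.val ++ d :: u := by
    intro t i d s
    constructor
    · rintro ⟨u, rfl⟩; exact ⟨u, by simp⟩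
    · rintro ⟨u, rfl⟩; exact ⟨u, by simp⟩
  have split : ∀ (t : List (Fin (k+2))) (i : Fin t.length),
      t = t.take i.val ++ t.get i :: t.drop (i.val + 1) := by
    intro t i
    conv_lhs => rw [← List.take_append_drop i.val t, List.drop_eq_getElem_cons i.isLt]
    simp [List.get_eq_getElem]
  -- characterization of A-membership
  have memA : ∀ z, z ∈ A ↔ (sa.length < K ∧ z = sa) ∨
      ∃ i : Fin sa.length, ∃ d : Fin (k+2), sa.get i < d ∧ z = sa.take i.val ++ [d] := by
    intro z
    simp only [hA, Finset.mem_union, Finset.mem_image, Finset.mem_filter, Finset.mem_univ,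
      true_and]
    constructor
    · rintro (h | ⟨⟨i, d⟩, hd, rfl⟩)
      · by_cases hl : sa.length < K
        · simp [hl] at h; exact Or.inl ⟨hl, h⟩
        · simp [hl] at h
      · exact Or.inr ⟨i, d, hd, rfl⟩
    · rintro (⟨hl, rfl⟩ | ⟨i, d, hd, rfl⟩)
      · simp [hl]
      · exact Or.inr ⟨⟨i, d⟩, hd, rfl⟩
  have memB : ∀ z, z ∈ B ↔
      ∃ i : Fin sb.length, ∃ d : Fin (k+2), d < sb.get i ∧ z = sb.take i.val ++ [d] := by
    intro z
    simp only [hB, Finset.mem_image, Finset.mem_filter, Finset.mem_univ, true_and]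
    constructor
    · rintro ⟨⟨i, d⟩, hd, rfl⟩; exact ⟨i, d, hd, rfl⟩
    · rintro ⟨i, d, hd, rfl⟩; exact ⟨⟨i, d⟩, hd, rfl⟩
  -- lengths
  have lenA : ∀ x ∈ A, x.length ≤ K := by
    intro x hx
    rcases (memA x).1 hx with ⟨_, rfl⟩ | ⟨i, d, _, rfl⟩
    · omega
    · rw [dev_len]; have := i.isLt; omega
  have lenB : ∀ x ∈ B, x.length ≤ K := by
    intro x hx
    rcases (memB x).1 hx with ⟨i, d, _, rfl⟩
    rw [dev_len]; have := i.isLt; omega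
  -- characterization of `sa <lex s`
  have keyA : ∀ s : List (Fin (k+2)), s.length = K →
      (List.Lex (· < ·) sa s ↔ ∃ x ∈ A, x <+: s) := by
    intro s hs
    constructor
    · intro h
      rcases (lex_iff sa s).1 h with ⟨hp, hne⟩ | ⟨p, x, y, u, v, hxy, ha, hb⟩
      · have hlt : sa.length < K := by
          rcases lt_or_eq_of_le (hs ▸ hp.length_le) with h | h
          · omega
          · exact absurd (hp.eq_of_length (h.trans hs.symm)) hne
        exact ⟨sa, (memA sa).2 (Or.inl ⟨hlt, rfl⟩), hp⟩
      · have hip : p.length < sa.length := by rw [ha]; simp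
        refine ⟨sa.take p.length ++ [y], (memA _).2 (Or.inr ⟨⟨p.length, hip⟩, y, ?_, rfl⟩), ?_⟩
        · have : sa.get ⟨p.length, hip⟩ = x := by
            rw [List.get_eq_getElem, List.getElem_of_eq ha hip,
              List.getElem_append_right (le_refl p.length)]
            simp
          rw [this]; exact hxy
        · have hp : sa.take p.length = p := by rw [ha]; simp
          rw [hp, hb]; exact ⟨v, by simp⟩
    · rintro ⟨x, hx, hxs⟩
      rcases (memA x).1 hx with ⟨hl, rfl⟩ | ⟨i, d, hd, rfl⟩
      · refine lex_of_prefix_ne hxs (fun h => ?_)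
        rw [h] at hl; omega
      · obtain ⟨u, rfl⟩ := (dev_prefix sa i d s).1 hxs
        refine (lex_iff _ _).2 (Or.inr ⟨sa.take i.val, sa.get i, d,
          sa.drop (i.val + 1), u, hd, split sa i, rfl⟩)
  -- characterization of `s <lex sb`
  have keyB : ∀ s : List (Fin (k+2)), s.length = K →
      (List.Lex (· < ·) s sb ↔ ∃ x ∈ B, x <+: s) := by
    intro s hs
    constructor
    · intro h
      rcases (lex_iff s sb).1 h with ⟨hp, hne⟩ | ⟨p, x, y, u, v, hxy, ha, hb⟩
      · exact absurd (hp.eq_of_length (le_antisymm hp.length_le (by omega))) hne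
      · have hip : p.length < sb.length := by rw [hb]; simp
        refine ⟨sb.take p.length ++ [x], (memB _).2 ⟨⟨p.length, hip⟩, x, ?_, rfl⟩, ?_⟩
        · have : sb.get ⟨p.length, hip⟩ = y := by
            rw [List.get_eq_getElem, List.getElem_of_eq hb hip,
              List.getElem_append_right (le_refl p.length)]
            simp
          rw [this]; exact hxy
        · have hp : sb.take p.length = p := by rw [hb]; simp
          rw [hp, ha]; exact ⟨u, by simp⟩
    · rintro ⟨x, hx, hxs⟩
      rcases (memB x).1 hx with ⟨i, d, hd, rfl⟩
      obtain ⟨u, rfl⟩ := (dev_prefix sb i d s).1 hxs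
      refine (lex_iff _ _).2 (Or.inr ⟨sb.take i.val, d, sb.get i,
        u, sb.drop (i.val + 1), hd, rfl, split sb i⟩)
  -- incomparability within A
  have incompA : ∀ x ∈ A, ∀ y ∈ A, x <+: y → x = y := by
    intro x hx y hy hxy
    rcases (memA x).1 hx with ⟨hl, hxe⟩ | ⟨i, d, hd, hxe⟩ <;>
      rcases (memA y).1 hy with ⟨hl', hye⟩ | ⟨i', d', hd', hye⟩ <;>
      rw [hxe, hye] at hxy ⊢
    · -- sa <+: take i' ++ [d']
      exfalso
      have hlen : sa.length ≤ i'.val + 1 := by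
        have := hxy.length_le; rw [dev_len] at this; exact this
      have hlen' : sa.length = i'.val + 1 := by have := i'.isLt; omega
      have heq : sa = sa.take i'.val ++ [d'] := hxy.eq_of_length (by rw [dev_len]; omega)
      have : sa[i'.val]'(i'.isLt) = d' := by
        rw [List.getElem_of_eq heq i'.isLt]
        exact List.getElem_concat_length (by
          simp [List.length_take, Nat.min_eq_left (Nat.le_of_lt i'.isLt)]) _
      rw [List.get_eq_getElem] at hd'; rw [this] at hd'; exact lt_irrefl _ hd'
    · -- take i ++ [d] <+: sa
      exfalso
      have : (sa.take i.val ++ [d])[i.val]'(by rw [dev_len]; omega) = sa[i.val]'(i.isLt) :=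
        hxy.getElem _
      rw [dev_get_last sa i d] at this
      rw [List.get_eq_getElem, ← this] at hd; exact lt_irrefl _ hd
    · -- two deviations
      have hle : i.val + 1 ≤ i'.val + 1 := by
        have := hxy.length_le; rwa [dev_len, dev_len] at this
      rcases lt_or_eq_of_le (by omega : i.val ≤ i'.val) with hlt | heq
      · exfalso
        have h1 : (sa.take i.val ++ [d])[i.val]'(by rw [dev_len]; omega)
            = (sa.take i'.val ++ [d'])[i.val]'(by rw [dev_len]; omega) := hxy.getElem _
        rw [dev_get_last sa i d, dev_get_lt sa i' d' i.val hlt] at h1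
        rw [List.get_eq_getElem, h1] at hd; exact lt_irrefl _ hd
      · exact hxy.eq_of_length (by rw [dev_len, dev_len, heq])
  -- incomparability within B
  have incompB : ∀ x ∈ B, ∀ y ∈ B, x <+: y → x = y := by
    intro x hx y hy hxy
    obtain ⟨i, d, hd, rfl⟩ := (memB x).1 hx
    obtain ⟨i', d', hd', rfl⟩ := (memB y).1 hy
    have hle : i.val + 1 ≤ i'.val + 1 := by
      have := hxy.length_le; rwa [dev_len, dev_len] at this
    rcases lt_or_eq_of_le (by omega : i.val ≤ i'.val) with hlt | heq
    · exfalso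
      have h1 : (sb.take i.val ++ [d])[i.val]'(by rw [dev_len]; omega)
          = (sb.take i'.val ++ [d'])[i.val]'(by rw [dev_len]; omega) := hxy.getElem _
      rw [dev_get_last sb i d, dev_get_lt sb i' d' i.val hlt] at h1
      rw [List.get_eq_getElem, ← h1] at hd; exact lt_irrefl _ hd
    · exact hxy.eq_of_length (by rw [dev_len, dev_len, heq])
  refine ⟨X, ?_, ?_, ?_, ?_⟩
  · -- cardinality
    have cA : A.card ≤ 1 + sa.length * (k + 1) := by
      refine le_trans (Finset.card_union_le _ _) ?_
      gcongr
      · split <;> simp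
      · refine le_trans Finset.card_image_le ?_
        refine le_trans (Finset.card_le_card (fun p hp => ?_ :
            (Finset.univ.filter fun p : Fin sa.length × Fin (k + 2) => sa.get p.1 < p.2)
              ⊆ Finset.univ ×ˢ (Finset.univ.erase 0))) ?_
        · simp only [Finset.mem_filter] at hp
          simp only [Finset.mem_product, Finset.mem_univ, Finset.mem_erase, true_and, and_true]
          intro h0
          rw [h0] at hp
          exact absurd hp.2 (by simp)
        · rw [Finset.card_product, Finset.card_erase_of_mem (Finset.mem_univ _)]
          simp
    have cB : B.card ≤ sb.length * (k + 1) := by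
      refine le_trans Finset.card_image_le ?_
      refine le_trans (Finset.card_le_card (fun p hp => ?_ :
          (Finset.univ.filter fun p : Fin sb.length × Fin (k + 2) => p.2 < sb.get p.1)
            ⊆ Finset.univ ×ˢ (Finset.univ.erase (Fin.last (k + 1))))) ?_
      · simp only [Finset.mem_filter] at hp
        simp only [Finset.mem_product, Finset.mem_univ, Finset.mem_erase, true_and, and_true]
        intro h0
        rw [h0] at hp
        exact absurd hp.2 (by simpa using Fin.le_last _)
      · rw [Finset.card_product, Finset.card_erase_of_mem (Finset.mem_univ _)]
        simp
    have : X.card ≤ A.card + B.card :=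
      le_trans (Finset.card_le_card (Finset.filter_subset _ _)) (Finset.card_union_le _ _)
    have h1 : 1 + sa.length * (k + 1) ≤ K * (k + 2) := by nlinarith
    have h2 : sb.length * (k + 1) ≤ K * (k + 1) := by nlinarith
    calc X.card ≤ A.card + B.card := this
      _ ≤ (1 + sa.length * (k + 1)) + sb.length * (k + 1) := by omega
      _ ≤ 2 * K * (k + 2) := by nlinarith
  · -- lengths
    intro x hx
    rw [hX, Finset.mem_filter, Finset.mem_union] at hx
    rcases hx.1 with h | h
    · exact lenA x h
    · exact lenB x h
  · -- the interval equals the union of blocks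
    intro s hs
    constructor
    · rintro ⟨h1, h2⟩
      obtain ⟨x, hx, hxs⟩ := (keyA s hs).1 h1
      obtain ⟨y, hy, hys⟩ := (keyB s hs).1 h2
      rcases List.prefix_or_prefix_of_prefix hxs hys with h | h
      · refine ⟨y, ?_, hys⟩
        rw [hX, Finset.mem_filter]
        exact ⟨Finset.mem_union_right _ hy, ⟨x, hx, h⟩, ⟨y, hy, List.prefix_refl y⟩⟩
      · refine ⟨x, ?_, hxs⟩
        rw [hX, Finset.mem_filter]
        exact ⟨Finset.mem_union_left _ hx, ⟨x, hx, List.prefix_refl x⟩, ⟨y, hy, h⟩⟩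
    · rintro ⟨z, hz, hzs⟩
      rw [hX, Finset.mem_filter] at hz
      obtain ⟨-, ⟨x, hx, hxz⟩, ⟨y, hy, hyz⟩⟩ := hz
      exact ⟨(keyA s hs).2 ⟨x, hx, hxz.trans hzs⟩, (keyB s hs).2 ⟨y, hy, hyz.trans hzs⟩⟩
  · -- pairwise disjointness of the blocks
    intro x hx y hy hne s _ ⟨hxs, hys⟩
    rw [hX, Finset.mem_filter] at hx hy
    obtain ⟨hxAB, ⟨x', hx'A, hx'x⟩, ⟨x'', hx''B, hx''x⟩⟩ := hx
    obtain ⟨hyAB, ⟨y', hy'A, hy'y⟩, ⟨y'', hy''B, hy''y⟩⟩ := hy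
    -- wlog x <+: y via symmetry handled by a local claim
    have main : ∀ a b : List (Fin (k+2)),
        a ∈ A ∪ B → b ∈ A ∪ B →
        (∃ a' ∈ A, a' <+: a) → (∃ a'' ∈ B, a'' <+: a) →
        (∃ b' ∈ A, b' <+: b) → (∃ b'' ∈ B, b'' <+: b) →
        a <+: b → a = b := by
      rintro a b haAB hbAB ⟨a', ha'A, ha'a⟩ ⟨a'', ha''B, ha''a⟩ ⟨b', hb'A, hb'b⟩
        ⟨b'', hb''B, hb''b⟩ hab'
      rw [Finset.mem_union] at haAB hbAB
      rcases haAB with haA | haB <;> rcases hbAB with hbA | hbB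
      · exact incompA a haA b hbA hab'
      · -- a ∈ A, b ∈ B : use a'' ∈ B with a'' <+: a <+: b
        have : a'' = b := incompB a'' ha''B b hbB (ha''a.trans hab')
        subst this
        exact hab'.eq_of_length (le_antisymm hab'.length_le ha''a.length_le)
      · have : a' = b := incompA a' ha'A b hbA (ha'a.trans hab')
        subst this
        exact hab'.eq_of_length (le_antisymm hab'.length_le ha'a.length_le)
      · exact incompB a haB b hbB hab'
    rcases List.prefix_or_prefix_of_prefix hxs hys with h | h
    · exact hne (main x y hxAB hyAB ⟨x', hx'A, hx'x⟩ ⟨x'', hx''B, hx''x⟩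
        ⟨y', hy'A, hy'y⟩ ⟨y'', hy''B, hy''y⟩ h)
    · exact hne (main y x hyAB hxAB ⟨y', hy'A, hy'y⟩ ⟨y'', hy''B, hy''y⟩
        ⟨x', hx'A, hx'x⟩ ⟨x'', hx''B, hx''x⟩ h).symm

end RiffleShuffle
end

section
/- Let ε > 0 and let δ > 0 be sufficiently small depending on p and ε. Set θ = θ_p, α_tot = (1−δ)/(2·I(p,p^θ)), and α_i = p_i^θ·α_tot/φ_p(θ) for each i ∈ {0,…,k−1}; let β_tot > 0 satisfy α_tot + β_tot ≤ C_p − ε and set β_i = p_i²·β_tot/φ_p(2). Define γ = 2 + 2·∑_{i=0}^{k−1}(α_i+β_i)·log p_i + α_tot·H(α_0,…,α_{k−1}) + β_tot·H(β_0,…,β_{k−1}). Then γ ≥ (1/2)·(1 + ∑_{i=0}^{k−1} α_i·log p_i + α_tot·H(α_0,…,α_{k−1})) + (ψ_p(2)/2)·ε. -/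
open Finset

namespace RiffleShuffle

/-- `I(p, p^t) = ∑ i, p_i^t log(1/p_i) / φ_p(t)`. -/
noncomputable def Irel {k : ℕ} (p : Fin k → ℝ) (t : ℝ) : ℝ :=
  ∑ i, p i ^ t * Real.log (1 / p i) / phi p t

/-- The entropy of the probability vector with weights `a i / (∑ j, a j)` (with the
convention `H = 0` when all entries vanish). -/
noncomputable def Hent {k : ℕ} (a : Fin k → ℝ) : ℝ :=
  (∑ i, a i * Real.log ((∑ j, a j) / a i)) / (∑ j, a j)

lemma hent_eq {k : ℕ} (p : Fin k → ℝ) (hpos : ∀ i, 0 < p i)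
    (t c : ℝ) (hc : 0 < c) (a : Fin k → ℝ)
    (ha : ∀ i, a i = p i ^ t * c / phi p t) (hφ : 0 < phi p t) :
    c * Hent a = c * Real.log (phi p t) - t * ∑ i, a i * Real.log (p i) := by
  have hφne : phi p t ≠ 0 := hφ.ne'
  have hsum : ∑ i, a i = c := by
    have h1 : ∑ i, a i = (∑ i, p i ^ t * c) / phi p t := by
      rw [sum_div]
      exact Finset.sum_congr rfl fun i _ => ha i
    rw [h1, ← sum_mul, show (∑ i, p i ^ t) = phi p t from rfl]
    field_simp
  have hapos : ∀ i, 0 < a i := fun i => by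
    rw [ha i]
    exact div_pos (mul_pos (Real.rpow_pos_of_pos (hpos i) t) hc) hφ
  have hlog : ∀ i, Real.log (c / a i) = Real.log (phi p t) - t * Real.log (p i) := by
    intro i
    have hpt : (0:ℝ) < p i ^ t := Real.rpow_pos_of_pos (hpos i) t
    have h2 : c / a i = phi p t / p i ^ t := by
      rw [ha i]
      field_simp
    rw [h2, Real.log_div hφne hpt.ne', Real.log_rpow (hpos i)]
  have hX : ∑ i, a i * Real.log (c / a i)
      = c * Real.log (phi p t) - t * ∑ i, a i * Real.log (p i) := by
    calc ∑ i, a i * Real.log (c / a i)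
        = ∑ i, (a i * Real.log (phi p t) - t * (a i * Real.log (p i))) := by
          refine Finset.sum_congr rfl fun i _ => ?_
          rw [hlog i]; ring
      _ = (∑ i, a i) * Real.log (phi p t) - t * ∑ i, a i * Real.log (p i) := by
          rw [Finset.sum_sub_distrib, ← Finset.sum_mul, ← Finset.mul_sum]
      _ = c * Real.log (phi p t) - t * ∑ i, a i * Real.log (p i) := by rw [hsum]
  unfold Hent
  rw [hsum, hX]
  field_simp

/-- **Lemma (numerics for the lower bound)**: with `θ = θ_p`,
`α_tot = (1-δ)/(2 I(p,p^θ))`, `α_i = p_i^θ α_tot / φ_p(θ)`, `β_tot > 0` satisfying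
`α_tot + β_tot ≤ C_p - ε`, and `β_i = p_i² β_tot / φ_p(2)`, the constant
`γ = 2 + 2 ∑ (α_i + β_i) log p_i + α_tot H(α) + β_tot H(β)` satisfies
`γ ≥ (1/2)(1 + ∑ α_i log p_i + α_tot H(α)) + (ψ_p(2)/2) ε`, provided `δ` is sufficiently
small depending on `p` and `ε`. -/
theorem gamma_lower_bound (k : ℕ) (hk : 2 ≤ k) (p : Fin k → ℝ)
    (hpos : ∀ i, 0 < p i) (hsum : ∑ i, p i = 1)
    (θ : ℝ) (hθ : phi p θ = (phi p 2) ^ 2) (ε : ℝ) (hε : 0 < ε) :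
    ∃ δ₀ : ℝ, 0 < δ₀ ∧
      ∀ δ : ℝ, 0 < δ → δ ≤ δ₀ →
      ∀ (αtot βtot : ℝ) (α β : Fin k → ℝ) (γ : ℝ),
        αtot = (1 - δ) / (2 * Irel p θ) →
        (∀ i, α i = p i ^ θ * αtot / phi p θ) →
        0 < βtot →
        αtot + βtot ≤ Cmain p θ - ε →
        (∀ i, β i = p i ^ 2 * βtot / phi p 2) →
        γ = 2 + 2 * (∑ i, (α i + β i) * Real.log (p i)) + αtot * Hent α + βtot * Hent β →
        (1 / 2) * (1 + (∑ i, α i * Real.log (p i)) + αtot * Hent α) + (psi p 2 / 2) * ε ≤ γ := by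
  haveI : NeZero k := ⟨by omega⟩
  have hne : (Finset.univ : Finset (Fin k)).Nonempty := Finset.univ_nonempty
  -- each `p i < 1`
  have hp1 : ∀ i, p i < 1 := by
    intro i
    obtain ⟨j, hj⟩ : ∃ j : Fin k, j ≠ i := by
      rcases eq_or_ne i ⟨0, by omega⟩ with h | h
      · exact ⟨⟨1, by omega⟩, by rw [h]; simp [Fin.ext_iff]⟩
      · exact ⟨⟨0, by omega⟩, Ne.symm h⟩
    calc p i < ∑ l, p l :=
          Finset.single_lt_sum hj (mem_univ i) (mem_univ j) (hpos j)
            (fun l _ _ => (hpos l).le)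
      _ = 1 := hsum
  have hφ2pos : 0 < phi p 2 :=
    Finset.sum_pos (fun i _ => Real.rpow_pos_of_pos (hpos i) 2) hne
  have hφ2lt1 : phi p 2 < 1 := by
    have : ∀ i ∈ Finset.univ, p i ^ (2:ℝ) < p i := by
      intro i _
      have := Real.rpow_lt_rpow_of_exponent_gt (hpos i) (hp1 i) (by norm_num : (1:ℝ) < 2)
      rwa [Real.rpow_one] at this
    calc phi p 2 < ∑ i, p i := Finset.sum_lt_sum_of_nonempty hne this
      _ = 1 := hsum
  have hL : Real.log (phi p 2) < 0 := Real.log_neg hφ2pos hφ2lt1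
  have hψpos : 0 < psi p 2 := by unfold psi; linarith
  have hφθpos : 0 < phi p θ := by rw [hθ]; positivity
  have hlogθ : Real.log (phi p θ) = 2 * Real.log (phi p 2) := by
    rw [hθ, Real.log_pow]; push_cast; ring
  have hI2 : Irel p θ = -(∑ i, p i ^ θ * Real.log (p i)) / phi p θ := by
    unfold Irel
    rw [← sum_div]
    congr 1
    rw [← Finset.sum_neg_distrib]
    refine Finset.sum_congr rfl fun i _ => ?_
    rw [one_div, Real.log_inv]; ring
  have hIpos : 0 < Irel p θ := by
    rw [hI2, neg_div]
    apply neg_pos.mpr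
    apply div_neg_of_neg_of_pos _ hφθpos
    apply Finset.sum_neg (fun i _ => ?_) hne
    exact mul_neg_of_pos_of_neg (Real.rpow_pos_of_pos (hpos i) θ)
      (Real.log_neg (hpos i) (hp1 i))
  refine ⟨min (1/2) (2 * psi p 2 * ε / (1 + |θ - 3|)), ?_, ?_⟩
  · apply lt_min (by norm_num)
    positivity
  intro δ hδ hδle αtot βtot α β γ hαdef hαi hβt hCe hβi hγ
  have hδhalf : δ ≤ 1/2 := hδle.trans (min_le_left _ _)
  have hαt : 0 < αtot := by
    rw [hαdef]
    exact div_pos (by linarith) (by linarith)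
  -- value of ∑ αᵢ log pᵢ
  have hS : (∑ i, p i ^ θ * Real.log (p i)) = -(Irel p θ * phi p θ) := by
    rw [hI2]
    field_simp
  have hA : ∑ i, α i * Real.log (p i) = -((1 - δ)/2) := by
    have h1 : ∑ i, α i * Real.log (p i)
        = (∑ i, p i ^ θ * Real.log (p i)) * (αtot / phi p θ) := by
      rw [sum_mul]
      refine Finset.sum_congr rfl fun i _ => ?_
      rw [hαi i]; ring
    rw [h1, hS, hαdef]
    field_simp
  -- entropies
  have hHα := hent_eq p hpos θ αtot hαt α hαi hφθpos
  have hβi' : ∀ i, β i = p i ^ (2:ℝ) * βtot / phi p 2 := fun i => by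
    rw [hβi i, show ((2:ℝ)) = ((2:ℕ):ℝ) by norm_num, Real.rpow_natCast]
  have hHβ := hent_eq p hpos 2 βtot hβt β hβi' hφ2pos
  have hHα' : αtot * Hent α
      = 2 * αtot * Real.log (phi p 2) + θ * ((1 - δ)/2) := by
    rw [hHα, hlogθ, hA]; ring
  have hHβ' : βtot * Hent β
      = βtot * Real.log (phi p 2) - 2 * ∑ i, β i * Real.log (p i) := hHβ
  -- the constraint multiplied by ψ
  have hCψ : psi p 2 * Cmain p θ = (3 + θ)/4 := by
    unfold Cmain
    field_simp
  have hMul : psi p 2 * (αtot + βtot) ≤ (3 + θ)/4 - psi p 2 * ε := by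
    calc psi p 2 * (αtot + βtot) ≤ psi p 2 * (Cmain p θ - ε) :=
          mul_le_mul_of_nonneg_left hCe hψpos.le
      _ = (3 + θ)/4 - psi p 2 * ε := by rw [mul_sub, hCψ]
  -- the smallness condition on δ
  have habs : (0:ℝ) < 1 + |θ - 3| := by positivity
  have hδθ : δ * (θ - 3) ≤ 2 * psi p 2 * ε := by
    have h2 : δ * (1 + |θ - 3|) ≤ 2 * psi p 2 * ε := by
      have h3 := hδle.trans (min_le_right _ _)
      calc δ * (1 + |θ - 3|) ≤ (2 * psi p 2 * ε / (1 + |θ - 3|)) * (1 + |θ - 3|) :=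
            mul_le_mul_of_nonneg_right h3 habs.le
        _ = 2 * psi p 2 * ε := by field_simp
    nlinarith [le_abs_self (θ - 3), hδ.le, abs_nonneg (θ - 3)]
  -- split the sum in γ
  have hsplit : ∑ i, (α i + β i) * Real.log (p i)
      = (∑ i, α i * Real.log (p i)) + ∑ i, β i * Real.log (p i) := by
    rw [← Finset.sum_add_distrib]
    exact Finset.sum_congr rfl fun i _ => by ring
  have hψd : psi p 2 = -Real.log (phi p 2) := rfl
  rw [hψd] at hMul hδθ ⊢
  rw [hγ, hsplit, hHα', hHβ', hA]
  nlinarith [hMul, hδθ]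

end RiffleShuffle
end
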